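/- Let (X,d) be a metric space, v : X → ℝ bounded below, G : X → [0,∞) Borel, and let η : [0,∞) → X be a gradient-flow curve of v with respect to G. Set ℓ := v + (1/2)G². Then the integral ∫_0^∞ e^{−t} ( (1/2) G(η(t))² + ℓ(η(t)) ) dt is finite and equals v(η(0)); equivalently, ∫_0^∞ e^{−t} ( G(η(t))² + v(η(t)) ) dt = v(η(0)). -/

import Mathlib

open MeasureTheory Set Filter
open scoped ENNReal

noncomputable section

/-- `m` is a (nonnegative, integrable) upper speed of the curve `γ` on `[a,b]`:
`dist (γ s) (γ t) ≤ ∫_s^t m` for all `a ≤ s ≤ t ≤ b`. -/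
def IsUpperSpeedOn {X : Type*} [MetricSpace X] (γ : ℝ → X) (m : ℝ → ℝ) (a b : ℝ) : Prop :=
  (∀ r ∈ Set.Icc a b, 0 ≤ m r) ∧
  IntervalIntegrable m MeasureTheory.volume a b ∧
  ∀ s t : ℝ, a ≤ s → s ≤ t → t ≤ b → dist (γ s) (γ t) ≤ ∫ r in s..t, m r

/-- The Finsler cost `d_G(x,y)`: the infimum of `∫_0^1 m(t) G(γ(t)) dt` over continuous
curves `γ : [0,1] → X` joining `x` to `y` with integrable upper speed `m`;
`+∞` if no admissible pair exists. -/
def finslerCost {X : Type*} [MetricSpace X] (G : X → ℝ) (x y : X) : ℝ≥0∞ :=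
  sInf { c : ℝ≥0∞ | ∃ γ : ℝ → X, ∃ m : ℝ → ℝ,
    ContinuousOn γ (Set.Icc 0 1) ∧ γ 0 = x ∧ γ 1 = y ∧
    IsUpperSpeedOn γ m 0 1 ∧
    c = ∫⁻ t in Set.Ioc (0:ℝ) 1, ENNReal.ofReal (m t * G (γ t)) }

/-- The action `E_G^T(x,y)`: the infimum of `∫_0^T ((1/2) m(t)² + (1/2) G(γ(t))²) dt` over
continuous curves `γ : [0,T] → X` joining `x` to `y` with square-integrable upper speed `m`;
`+∞` if no admissible pair exists. -/
def actionCost {X : Type*} [MetricSpace X] (G : X → ℝ) (T : ℝ) (x y : X) : ℝ≥0∞ :=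
  sInf { c : ℝ≥0∞ | ∃ γ : ℝ → X, ∃ m : ℝ → ℝ,
    ContinuousOn γ (Set.Icc 0 T) ∧ γ 0 = x ∧ γ T = y ∧
    IsUpperSpeedOn γ m 0 T ∧
    IntervalIntegrable (fun t => (m t) ^ 2) MeasureTheory.volume 0 T ∧
    c = ∫⁻ t in Set.Ioc (0:ℝ) T,
          ENNReal.ofReal ((1/2) * (m t) ^ 2 + (1/2) * (G (γ t)) ^ 2) }

/-- `G` is a strong upper gradient of `v`: along every continuous curve with integrable
upper speed `m`, `|v(γ t) − v(γ s)| ≤ ∫_s^t G(γ r) m(r) dr` (the right-hand side taken as a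
possibly infinite nonnegative integral). -/
def IsStrongUpperGradient {X : Type*} [MetricSpace X] (G v : X → ℝ) : Prop :=
  ∀ (a b : ℝ) (γ : ℝ → X) (m : ℝ → ℝ),
    ContinuousOn γ (Set.Icc a b) → IsUpperSpeedOn γ m a b →
    ∀ s t : ℝ, a ≤ s → s ≤ t → t ≤ b →
      ENNReal.ofReal |v (γ t) - v (γ s)| ≤
        ∫⁻ r in Set.Ioc s t, ENNReal.ofReal (G (γ r) * m r)

/-- A gradient-flow curve (curve of maximal slope in energy-dissipation form) of `v` with
respect to `G`: `η` is continuous on `[0,∞)`, `G∘η` is square-integrable on compacts and is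
an upper speed of `η` on every compact subinterval of `[0,∞)`, and the energy-dissipation
equality `v(η s) − v(η t) = ∫_s^t G(η r)² dr` holds for `0 ≤ s ≤ t`. -/
def IsGradientFlowCurve {X : Type*} [MetricSpace X] (v G : X → ℝ) (η : ℝ → X) : Prop :=
  ContinuousOn η (Set.Ici 0) ∧
  (∀ b : ℝ, 0 ≤ b → IntervalIntegrable (fun t => (G (η t)) ^ 2) MeasureTheory.volume 0 b) ∧
  (∀ a b : ℝ, 0 ≤ a → a ≤ b → IsUpperSpeedOn η (fun t => G (η t)) a b) ∧
  ∀ s t : ℝ, 0 ≤ s → s ≤ t → v (η s) - v (η t) = ∫ r in s..t, (G (η r)) ^ 2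

/-!
Along a gradient flow, `t ↦ v (η t)` is absolutely continuous with derivative `-G (η t)²`
almost everywhere, so `-e^{-t} v (η t)` is a primitive of `e^{-t} (G (η t)² + v (η t))`.
Integrating over `[0, T]` gives `v (η 0) - e^{-T} v (η T)`, and the boundary term vanishes as
`T → ∞` because `B ≤ v (η T) ≤ v (η 0)`. The same bound `v ≥ B` gives the integrable minorant
`B e^{-t}`, which turns convergence of the partial integrals into integrability on `(0, ∞)`.
-/

open Real Topology

theorem intervalIntegral_exp_neg_mul_add_of_eq_sub_integral {f g : ℝ → ℝ} {a b : ℝ}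
    (hg : IntervalIntegrable g volume a b)
    (hf : ∀ t ∈ uIcc a b, f t = f a - ∫ r in a..t, g r) :
    IntervalIntegrable (fun t => exp (-t) * (g t + f t)) volume a b ∧
    ∫ t in a..b, exp (-t) * (g t + f t) = exp (-a) * f a - exp (-b) * f b := by
  set u : ℝ → ℝ := fun t => exp (-t) * ((∫ r in a..t, g r) - f a)
  have hu : AbsolutelyContinuousOnInterval u a b :=
    ((contDiff_id.neg.exp).contDiffOn.absolutelyContinuousOnInterval).fun_mul
      ((hg.absolutelyContinuousOnInterval_intervalIntegral left_mem_uIcc).fun_sub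
        contDiffOn_const.absolutelyContinuousOnInterval)
  have hderiv : ∀ᵐ t, t ∈ uIoc a b → deriv u t = exp (-t) * (g t + f t) := by
    filter_upwards [hg.ae_hasDerivAt_integral] with t hFderiv htab
    have htab' : t ∈ uIcc a b := uIoc_subset_uIcc htab
    have hF := (hFderiv htab' a left_mem_uIcc).sub_const (f a)
    rw [((hasDerivAt_neg t).exp.fun_mul hF).deriv, hf t htab']
    ring
  refine ⟨(intervalIntegrable_congr_ae ((ae_restrict_iff' measurableSet_uIoc).mpr hderiv)).mp
    hu.intervalIntegrable_deriv, ?_⟩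
  rw [← intervalIntegral.integral_congr_ae hderiv, hu.integral_deriv_eq_sub, hf b right_mem_uIcc]
  simp only [u, intervalIntegral.integral_same]
  ring

theorem integrableOn_Ioi_and_integral_eq_of_tendsto_of_nonneg {φ : ℝ → ℝ} {a L : ℝ}
    (hφ : ∀ b, a ≤ b → IntervalIntegrable φ volume a b) (hφ0 : ∀ t, a < t → 0 ≤ φ t)
    (hlim : Tendsto (fun b => ∫ t in a..b, φ t) atTop (𝓝 L)) :
    IntegrableOn φ (Ioi a) ∧ ∫ t in Ioi a, φ t = L := by
  have hIoc : ∀ b, IntegrableOn φ (Ioc a b) := fun b => by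
    rcases le_or_gt a b with hab | hab
    · exact (hφ b hab).1
    · simp [Ioc_eq_empty_of_le hab.le]
  have hnorm : ∀ᶠ b in atTop, ∫ t in a..b, φ t = ∫ t in a..b, ‖φ t‖ := by
    filter_upwards [eventually_ge_atTop a] with b hab
    refine intervalIntegral.integral_congr_ae (ae_of_all _ fun t ht => ?_)
    rw [uIoc_of_le hab] at ht
    exact (norm_of_nonneg (hφ0 t ht.1)).symm
  have hint : IntegrableOn φ (Ioi a) :=
    integrableOn_Ioi_of_intervalIntegral_norm_tendsto L a hIoc tendsto_id (hlim.congr' hnorm)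
  exact ⟨hint, tendsto_nhds_unique (intervalIntegral_tendsto_integral_Ioi a hint tendsto_id) hlim⟩

theorem integrableOn_Ioi_and_integral_eq_of_tendsto_of_le {φ ψ : ℝ → ℝ} {a L : ℝ}
    (hψ : IntegrableOn ψ (Ioi a)) (hφ : ∀ b, a ≤ b → IntervalIntegrable φ volume a b)
    (hψφ : ∀ t, a < t → ψ t ≤ φ t)
    (hlim : Tendsto (fun b => ∫ t in a..b, φ t) atTop (𝓝 L)) :
    IntegrableOn φ (Ioi a) ∧ ∫ t in Ioi a, φ t = L := by
  have hψ_interval : ∀ b, a ≤ b → IntervalIntegrable ψ volume a b := fun b hab =>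
    (intervalIntegrable_iff_integrableOn_Ioc_of_le hab).mpr (hψ.mono_set Ioc_subset_Ioi_self)
  obtain ⟨hint, hval⟩ := integrableOn_Ioi_and_integral_eq_of_tendsto_of_nonneg
    (φ := fun t => φ t - ψ t) (fun b hab => (hφ b hab).sub (hψ_interval b hab))
    (fun t hat => sub_nonneg.mpr (hψφ t hat))
    ((hlim.sub (intervalIntegral_tendsto_integral_Ioi a hψ tendsto_id)).congr' <| by
      filter_upwards [eventually_ge_atTop a] with b hab
      exact (intervalIntegral.integral_sub (hφ b hab) (hψ_interval b hab)).symm)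
  have hsplit : φ = fun t => (φ t - ψ t) + ψ t := funext fun t => (sub_add_cancel _ _).symm
  rw [hsplit]
  exact ⟨hint.add hψ, by rw [integral_add hint hψ, hval, sub_add_cancel]⟩

theorem integrableOn_Ioi_exp_neg_mul_add_and_integral_eq {f g : ℝ → ℝ} {a B : ℝ}
    (hg0 : ∀ t, a ≤ t → 0 ≤ g t) (hg : ∀ b, a ≤ b → IntervalIntegrable g volume a b)
    (hf : ∀ t, a ≤ t → f t = f a - ∫ r in a..t, g r) (hB : ∀ t, a ≤ t → B ≤ f t) :
    IntegrableOn (fun t => exp (-t) * (g t + f t)) (Ioi a) ∧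
    ∫ t in Ioi a, exp (-t) * (g t + f t) = exp (-a) * f a := by
  have hfa : ∀ t, a ≤ t → f t ≤ f a := fun t hat => by
    rw [hf t hat, sub_le_self_iff]
    exact intervalIntegral.integral_nonneg hat fun r hr => hg0 r hr.1
  have hpartial : ∀ b, a ≤ b →
      IntervalIntegrable (fun t => exp (-t) * (g t + f t)) volume a b ∧
      ∫ t in a..b, exp (-t) * (g t + f t) = exp (-a) * f a - exp (-b) * f b := fun b hab =>
    intervalIntegral_exp_neg_mul_add_of_eq_sub_integral (hg b hab)
      fun t ht => hf t (uIcc_of_le hab ▸ ht).1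
  have hdecay : Tendsto (fun b => exp (-b) * f b) atTop (𝓝 0) :=
    tendsto_exp_neg_atTop_nhds_zero.zero_mul_isBoundedUnder_le
      ⟨max |B| |f a|, eventually_map.mpr <| by
        filter_upwards [eventually_ge_atTop a] with b hab
        exact abs_le_max_abs_abs (hB b hab) (hfa b hab)⟩
  have hlim : Tendsto (fun b => ∫ t in a..b, exp (-t) * (g t + f t)) atTop
      (𝓝 (exp (-a) * f a)) := by
    have h := (tendsto_const_nhds (x := exp (-a) * f a)).sub hdecay
    rw [sub_zero] at h
    exact h.congr' <| by
      filter_upwards [eventually_ge_atTop a] with b hab using (hpartial b hab).2.symm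
  refine integrableOn_Ioi_and_integral_eq_of_tendsto_of_le
    ((integrableOn_exp_neg_Ioi a).const_mul B) (fun b hab => (hpartial b hab).1)
    (fun t hat => ?_) hlim
  rw [mul_comm B]
  exact mul_le_mul_of_nonneg_left (by linarith [hg0 t hat.le, hB t hat.le]) (exp_pos _).le

theorem gradient_flow_attains_value {X : Type*} [MetricSpace X]
    (v G : X → ℝ)
    (B : ℝ) (hB : ∀ x : X, B ≤ v x)
    (η : ℝ → X) (hη : IsGradientFlowCurve v G η) :
    MeasureTheory.IntegrableOn
      (fun t => Real.exp (-t) * ((G (η t)) ^ 2 + v (η t))) (Set.Ioi 0)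
      MeasureTheory.volume ∧
    ∫ t in Set.Ioi (0:ℝ), Real.exp (-t) * ((G (η t)) ^ 2 + v (η t)) = v (η 0) := by
  obtain ⟨-, hsq, -, hEDE⟩ := hη
  have h := integrableOn_Ioi_exp_neg_mul_add_and_integral_eq (a := 0) (B := B)
    (f := fun t => v (η t)) (g := fun t => G (η t) ^ 2) (fun t _ => sq_nonneg _) hsq
    (fun t ht => by linarith [hEDE 0 t le_rfl ht]) (fun t _ => hB (η t))
  rwa [neg_zero, exp_zero, one_mul] at h
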